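/- arXiv:1909.07637 — 6 statements merged into one kernel-verified Lean document; each statement's English description precedes it below -/
import Mathlib

section
/- With the same comparator recurrence but initial carry c_1 = 1, the output c_{L+1} = 1 if and only if X >= Y. -/
lemma sum_bits_lt (L : ℕ) (b : ℕ → Bool) :
    (∑ i ∈ Finset.range L, (b i).toNat * 2 ^ i) < 2 ^ L := by
  induction L with
  | zero => simp
  | succ n ih =>
    rw [Finset.sum_range_succ, pow_succ]
    cases b n <;> simp <;> omega

/-- Correctness of the comparison circuit CMP with initial carry 1:
with `c 0 = true` and `c (i+1) = x i ⊕ ((x i ⊕ c i) ∧ (y i ⊕ c i))`,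
the final carry `c L` is 1 iff `X ≥ Y`, where `X` and `Y` are the
naturals whose binary digits (LSB first) are `x` and `y`. -/
theorem cmp_circuit_ge (L : ℕ) (x y : ℕ → Bool) (c : ℕ → Bool)
    (h0 : c 0 = true)
    (hrec : ∀ i < L, c (i + 1) = xor (x i) ((xor (x i) (c i)) && (xor (y i) (c i)))) :
    c L = true ↔
      (∑ i ∈ Finset.range L, (y i).toNat * 2 ^ i) ≤
        (∑ i ∈ Finset.range L, (x i).toNat * 2 ^ i) := by
  induction L with
  | zero => simp [h0]
  | succ n ih =>
    have ihh := ih (fun i hi => hrec i (hi.trans (Nat.lt_succ_self n)))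
    have hc := hrec n (Nat.lt_succ_self n)
    have hx := sum_bits_lt n x
    have hy := sum_bits_lt n y
    rw [Finset.sum_range_succ, Finset.sum_range_succ]
    cases hxn : x n <;> cases hyn : y n <;> cases hcn : c n <;>
      simp [hxn, hyn, hcn] at hc ihh <;>
        rw [hc] <;> simp [hxn, hyn] <;> omega
end

section
/- In the Goldwasser-Micali cryptosystem, decryption is correct: for distinct odd primes p, q with n = p*q, a quadratic non-residue x modulo n with Jacobi symbol 1, any message bit m in {0,1}, and any unit y in (Z/nZ)*, the ciphertext c = y^2 * x^m mod n is a quadratic residue modulo n if and only if m = 0. -/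
/-- Correctness of Goldwasser-Micali decryption: with `n = p*q` for distinct
odd primes `p, q`, and `x` a unit that is a quadratic non-residue modulo both
`p` and `q`, the ciphertext `c = y^2 * x^m` is a quadratic residue modulo `n`
iff the message bit `m` is 0. -/
theorem gm_decryption_correct (p q : ℕ) (hp : p.Prime) (hq : q.Prime)
    (hne : p ≠ q) (hpo : Odd p) (hqo : Odd q)
    (x y : ZMod (p * q)) (hxu : IsUnit x) (hyu : IsUnit y)
    (hxp : ¬ IsSquare (ZMod.castHom (dvd_mul_right p q) (ZMod p) x))
    (hxq : ¬ IsSquare (ZMod.castHom (dvd_mul_left q p) (ZMod q) x))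
    (m : Bool) :
    IsSquare (y ^ 2 * x ^ m.toNat) ↔ m = false := by
  haveI := Fact.mk hp
  cases m with
  | false => simp [sq]
  | true =>
    rw [show Bool.toNat true = 1 from rfl, pow_one]
    refine iff_of_false ?_ (by simp)
    rintro ⟨s, hs⟩
    apply hxp
    set f := ZMod.castHom (dvd_mul_right p q) (ZMod p)
    have hfy : f y ≠ 0 := (hyu.map f).ne_zero
    have h2 : (f y)^2 * f x = f s * f s := by
      have := congrArg f hs
      simpa [map_mul, map_pow] using this
    refine ⟨f s / f y, ?_⟩
    field_simp
    linear_combination h2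
end

section
/- The Goldwasser-Micali cryptosystem is XOR-homomorphic: with n = p*q and non-residue x as above, if c = y^2 * x^m mod n and c' = y'^2 * x^{m'} mod n encrypt bits m and m', then the product c * c' mod n decrypts to m XOR m', i.e., c*c' is a quadratic residue mod n iff m XOR m' = 0. -/
lemma gm_aux {N p : ℕ} (h : p ∣ N) (s x : ZMod N) (hs : IsUnit s)
    (hxp : ¬ IsSquare (ZMod.castHom h (ZMod p) x)) :
    ¬ IsSquare (s ^ 2 * x) := by
  intro hsq
  apply hxp
  have h2 : IsSquare ((ZMod.castHom h (ZMod p)) (s ^ 2 * x)) := hsq.map _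
  rw [map_mul, map_pow] at h2
  obtain ⟨u, hu⟩ := hs.map (ZMod.castHom h (ZMod p))
  obtain ⟨r, hr⟩ := h2
  have huv : (↑u⁻¹ : ZMod p) * ↑u = 1 := u.inv_mul
  refine ⟨(↑u⁻¹ : ZMod p) * r, ?_⟩
  calc (ZMod.castHom h (ZMod p)) x
      = ((↑u⁻¹ : ZMod p) * ↑u) ^ 2 * (ZMod.castHom h (ZMod p)) x := by
        rw [huv]; ring
    _ = (↑u⁻¹ : ZMod p) ^ 2 * ((↑u : ZMod p) ^ 2 * (ZMod.castHom h (ZMod p)) x) := by ring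
    _ = (↑u⁻¹ : ZMod p) ^ 2 * (r * r) := by rw [hu, hr]
    _ = (↑u⁻¹ : ZMod p) * r * ((↑u⁻¹ : ZMod p) * r) := by ring

/-- XOR-homomorphism of Goldwasser-Micali: if `c = y^2 * x^m` and
`c' = y'^2 * x^m'` encrypt bits `m` and `m'`, then `c * c'` decrypts to
`m XOR m'`, i.e. `c * c'` is a quadratic residue mod `n = p*q` iff
`m XOR m' = 0`. -/
theorem gm_xor_homomorphic (p q : ℕ) (hp : p.Prime) (hq : q.Prime)
    (hne : p ≠ q) (hpo : Odd p) (hqo : Odd q)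
    (x y y' : ZMod (p * q)) (hxu : IsUnit x) (hyu : IsUnit y) (hyu' : IsUnit y')
    (hxp : ¬ IsSquare (ZMod.castHom (dvd_mul_right p q) (ZMod p) x))
    (hxq : ¬ IsSquare (ZMod.castHom (dvd_mul_left q p) (ZMod q) x))
    (m m' : Bool) :
    IsSquare ((y ^ 2 * x ^ m.toNat) * (y' ^ 2 * x ^ m'.toNat)) ↔ xor m m' = false := by
  cases m <;> cases m' <;> simp only [Bool.toNat, cond, pow_zero, pow_one, mul_one,
    Bool.xor_false, Bool.xor_true, Bool.false_xor, Bool.true_xor, Bool.not_true,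
    Bool.not_false]
  · simp only [eq_self_iff_true, iff_true]
    exact ⟨y * y', by ring⟩
  · simp only [Bool.true_eq_false, iff_false]
    have : y ^ 2 * (y' ^ 2 * x) = (y * y') ^ 2 * x := by ring
    rw [this]
    exact gm_aux _ _ x (hyu.mul hyu') hxp
  · simp only [Bool.true_eq_false, iff_false]
    have : y ^ 2 * x * y' ^ 2 = (y * y') ^ 2 * x := by ring
    rw [this]
    exact gm_aux _ _ x (hyu.mul hyu') hxp
  · simp only [eq_self_iff_true, iff_true]
    exact ⟨y * y' * x, by ring⟩
end

section
/- Odd-even merge correctness: if a list of length n = 2^t (t >= 1) consists of two sorted halves each of length n/2, then the odd-even merge procedure (recursively merging the even-indexed and odd-indexed subsequences, then applying compare-and-swap to each pair (a_i, a_{i+1}) for odd i) produces a sorted list that is a permutation of the input. -/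
/-!
For a threshold `x`, the elements `≤ x` of a sorted list form a prefix, say of length `c`, so its
even- and odd-indexed subsequences contain `⌈c/2⌉` and `⌊c/2⌋` of them. Splitting the input into
its two sorted halves, the recursively merged even part `E` therefore has, for every `x`, between
`0` and `2` more elements `≤ x` than the merged odd part `O`. For sorted lists this amounts to
`E[i] ≤ O[i] ≤ E[i+2]`, and then the last layer of gates, which compares `O[i]` with `E[i+1]`,
leaves the list `E[0], min, max, min, max, …` sorted.
-/

/-- The even-indexed subsequence `a₀, a₂, a₄, …` of a list. -/
def evensOf {α : Type*} : List α → List α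
  | [] => []
  | [a] => [a]
  | a :: _ :: l => a :: evensOf l

/-- The odd-indexed subsequence `a₁, a₃, a₅, …` of a list. -/
def oddsOf {α : Type*} : List α → List α
  | [] => []
  | [_] => []
  | _ :: b :: l => b :: oddsOf l

/-- Interleave two lists: `interleave [e₀,e₁,…] [o₀,o₁,…] = [e₀,o₀,e₁,o₁,…]`. -/
def interleave {α : Type*} : List α → List α → List α
  | [], l' => l'
  | a :: l, l' => a :: interleave l' l
termination_by l l' => l.length + l'.length
decreasing_by simp; omega

/-- Apply a compare-and-swap gate to each consecutive pair
`(a₀,a₁), (a₂,a₃), …` of a list. -/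
def cswapPairs {α : Type*} [LinearOrder α] : List α → List α
  | a :: b :: l => min a b :: max a b :: cswapPairs l
  | l => l

/-- Batcher's odd-even merge on a list of length `2^t`: recursively merge the
even-indexed and odd-indexed subsequences, interleave the results, and apply
compare-and-swap to each pair `(aᵢ, aᵢ₊₁)` for odd `i`. -/
def oemerge {α : Type*} [LinearOrder α] : ℕ → List α → List α
  | 0, l => l
  | 1, l => cswapPairs l
  | t + 2, l =>
    match interleave (oemerge (t + 1) (evensOf l)) (oemerge (t + 1) (oddsOf l)) with
    | [] => []
    | a :: rest => a :: cswapPairs rest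

open scoped List

section

variable {α : Type*}

theorem evensOf_sublist : ∀ l : List α, evensOf l <+ l
  | [] | [_] => .refl _
  | a :: b :: l => ((evensOf_sublist l).cons b).cons_cons a

theorem oddsOf_sublist : ∀ l : List α, oddsOf l <+ l
  | [] => .refl _
  | [_] => List.nil_sublist _
  | a :: b :: l => ((oddsOf_sublist l).cons_cons b).cons a

theorem length_evensOf : ∀ l : List α, (evensOf l).length = (l.length + 1) / 2
  | [] | [_] => by simp [evensOf]
  | _ :: _ :: l => by simp only [evensOf, List.length_cons, length_evensOf l]; omega

theorem length_oddsOf : ∀ l : List α, (oddsOf l).length = l.length / 2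
  | [] | [_] => by simp [oddsOf]
  | _ :: _ :: l => by simp only [oddsOf, List.length_cons, length_oddsOf l]; omega

theorem evensOf_append : ∀ {A : List α}, Even A.length → ∀ B,
    evensOf (A ++ B) = evensOf A ++ evensOf B
  | [], _, _ => rfl
  | [_], h, _ => by simp at h
  | a :: _ :: A, h, B => by
    simp [evensOf, evensOf_append (A := A) (by simpa [parity_simps] using h) B]

theorem oddsOf_append : ∀ {A : List α}, Even A.length → ∀ B,
    oddsOf (A ++ B) = oddsOf A ++ oddsOf B
  | [], _, _ => rfl
  | [_], h, _ => by simp at h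
  | _ :: b :: A, h, B => by
    simp [oddsOf, oddsOf_append (A := A) (by simpa [parity_simps] using h) B]

theorem interleave_evensOf_oddsOf : ∀ l : List α, interleave (evensOf l) (oddsOf l) = l
  | [] | [_] => by simp [evensOf, oddsOf, interleave]
  | _ :: _ :: l => by simp [evensOf, oddsOf, interleave, interleave_evensOf_oddsOf l]

theorem interleave_perm_append : ∀ l l' : List α, interleave l l' ~ l ++ l'
  | [], _ => by simp [interleave]
  | a :: l, l' => by
    rw [interleave, List.cons_append]
    exact ((interleave_perm_append l' l).trans List.perm_append_comm).cons a
termination_by l l' => l.length + l'.length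

theorem evensOf_append_oddsOf_perm (l : List α) : evensOf l ++ oddsOf l ~ l := by
  simpa only [interleave_evensOf_oddsOf] using (interleave_perm_append (evensOf l) (oddsOf l)).symm

section PrefixClosed

variable {p : α → Bool}

theorem countP_eq_zero_of_pairwise_of_not {a : α} {l : List α}
    (h : (a :: l).Pairwise fun x y => p y → p x) (ha : ¬p a) : l.countP p = 0 :=
  List.countP_eq_zero.2 fun _ hy hpy => ha (List.rel_of_pairwise_cons h hy hpy)

theorem countP_evensOf_of_pairwise : ∀ {l : List α}, (l.Pairwise fun x y => p y → p x) →
    (evensOf l).countP p = (l.countP p + 1) / 2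
  | [], _ => by simp [evensOf]
  | [a], _ => by by_cases ha : p a <;> simp [evensOf, ha]
  | a :: b :: l, h => by
    have ih := countP_evensOf_of_pairwise h.of_cons.of_cons
    by_cases hb : p b
    · have ha : p a := List.rel_of_pairwise_cons h List.mem_cons_self hb
      simp only [evensOf, List.countP_cons, ha, hb, ih]
      omega
    · have hl := countP_eq_zero_of_pairwise_of_not h.of_cons hb
      simp only [evensOf, List.countP_cons, hb, ih, hl]
      cases p a <;> rfl

theorem countP_oddsOf_of_pairwise {l : List α} (h : l.Pairwise fun x y => p y → p x) :
    (oddsOf l).countP p = l.countP p / 2 := by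
  have hsplit := (evensOf_append_oddsOf_perm l).countP_eq p
  rw [List.countP_append, countP_evensOf_of_pairwise h] at hsplit
  omega

theorem lt_countP_iff_of_pairwise : ∀ {l : List α}, (l.Pairwise fun x y => p y → p x) →
    ∀ {i : ℕ} {b : α}, l[i]? = some b → (i < l.countP p ↔ p b)
  | [], _, _, _, hb => by simp at hb
  | a :: l, h, i, b, hb => by
    by_cases ha : p a
    · cases i with
      | zero => simp_all
      | succ i =>
        simp only [List.getElem?_cons_succ] at hb
        simp [ha, lt_countP_iff_of_pairwise h.of_cons hb]
    · have hl := countP_eq_zero_of_pairwise_of_not h ha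
      have hpb : ¬p b := by
        cases i with
        | zero => simp_all
        | succ i => exact fun hpb => ha (List.rel_of_pairwise_cons h (List.mem_of_getElem? hb) hpb)
      simp [ha, hl, hpb]

end PrefixClosed

variable [LinearOrder α]

theorem cswapPairs_perm : ∀ l : List α, cswapPairs l ~ l
  | [] | [_] => .refl _
  | a :: b :: l => by
    have hab : [min a b, max a b] ~ [a, b] := by
      rcases le_total a b with h | h
      · simp [h]
      · simpa [h] using List.Perm.swap a b []
    simpa [cswapPairs] using hab.append (cswapPairs_perm l)

theorem cswapPairs_eq_self_of_pairwise : ∀ {l : List α}, l.Pairwise (· ≤ ·) → cswapPairs l = l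
  | [], _ | [_], _ => rfl
  | a :: b :: l, h => by
    have hab : a ≤ b := List.rel_of_pairwise_cons h List.mem_cons_self
    simp [cswapPairs, hab, cswapPairs_eq_self_of_pairwise h.of_cons.of_cons]

theorem oemerge_add_two_of_interleave_eq_cons {t : ℕ} {l : List α} {c : α} {rest : List α}
    (h : interleave (oemerge (t + 1) (evensOf l)) (oemerge (t + 1) (oddsOf l)) = c :: rest) :
    oemerge (t + 2) l = c :: cswapPairs rest := by
  simp [oemerge, h]

theorem oemerge_perm : ∀ (t : ℕ) (l : List α), oemerge t l ~ l
  | 0, _ => .refl _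
  | 1, l => cswapPairs_perm l
  | t + 2, l => by
    have hmerged : interleave (oemerge (t + 1) (evensOf l)) (oemerge (t + 1) (oddsOf l)) ~ l :=
      (interleave_perm_append _ _).trans
        (((oemerge_perm _ _).append (oemerge_perm _ _)).trans (evensOf_append_oddsOf_perm l))
    rcases h : interleave (oemerge (t + 1) (evensOf l)) (oemerge (t + 1) (oddsOf l))
      with _ | ⟨c, rest⟩
    · simpa [oemerge, h] using hmerged
    · rw [oemerge_add_two_of_interleave_eq_cons h]
      exact ((cswapPairs_perm rest).cons c).trans (h ▸ hmerged)

theorem pairwise_decide_le_imp_of_pairwise {l : List α} (hl : l.Pairwise (· ≤ ·)) (x : α) :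
    l.Pairwise fun a b => decide (b ≤ x) → decide (a ≤ x) :=
  hl.imp fun hab hb => by simpa using hab.trans (by simpa using hb)

theorem le_of_countP_le_add {u v : List α} (hu : u.Pairwise (· ≤ ·)) (hv : v.Pairwise (· ≤ ·))
    {k : ℕ} (h : ∀ x, u.countP (· ≤ x) ≤ v.countP (· ≤ x) + k) :
    ∀ (i : ℕ) a b, v[i]? = some a → u[i + k]? = some b → a ≤ b := by
  intro i a b ha hb
  by_contra hab
  have hu' := (lt_countP_iff_of_pairwise (pairwise_decide_le_imp_of_pairwise hu b) hb).2
    (by simp)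
  have hv' := (lt_countP_iff_of_pairwise (pairwise_decide_le_imp_of_pairwise hv b) ha).not.2
    (by simpa using hab)
  have := h b
  omega

theorem pairwise_cons_cswapPairs_interleave : ∀ {c : α} {e o : List α},
    (c :: e).Pairwise (· ≤ ·) → o.Pairwise (· ≤ ·) →
    (∀ (i : ℕ) a b, (c :: e)[i]? = some a → o[i]? = some b → a ≤ b) →
    (∀ (i : ℕ) a b, o[i]? = some a → (c :: e)[i + 2]? = some b → a ≤ b) →
    (c :: cswapPairs (interleave o e)).Pairwise (· ≤ ·)
  | c, e, [], he, _, _, _ => by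
    simpa [interleave, cswapPairs_eq_self_of_pairwise he.of_cons] using he
  | c, [], b :: o, _, ho, heo, _ => by
    have hcb : c ≤ b := heo 0 c b rfl rfl
    simp only [interleave, cswapPairs_eq_self_of_pairwise ho]
    rw [← List.isChain_iff_pairwise] at ho ⊢
    exact ho.cons_cons hcb
  | c, a :: e, b :: o, he, ho, heo, hoe => by
    -- the larger output of the gate on `(o[0], e[0])` takes over the role of `c`
    have he' : (max b a :: e).Pairwise (· ≤ ·) := by
      rcases e with _ | ⟨d, e⟩
      · exact List.pairwise_singleton _ _
      · have hbd : b ≤ d := hoe 0 b d rfl rfl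
        have had : a ≤ d := List.rel_of_pairwise_cons he.of_cons List.mem_cons_self
        rw [← List.isChain_iff_pairwise] at he ⊢
        exact he.tail.tail.cons_cons (max_le hbd had)
    have ih := pairwise_cons_cswapPairs_interleave (c := max b a) (e := e) (o := o)
      he' ho.of_cons
      (fun i => by
        cases i with
        | zero =>
          intro x y hx hy
          obtain rfl : max b a = x := by simpa using hx
          exact max_le (List.rel_of_pairwise_cons ho (List.mem_of_getElem? hy))
            (heo 1 a y rfl (by simpa using hy))
        | succ i => exact heo (i + 2))
      (fun i => hoe (i + 1))
    have hcb : c ≤ b := heo 0 c b rfl rfl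
    have hca : c ≤ a := List.rel_of_pairwise_cons he List.mem_cons_self
    have hstep : interleave (b :: o) (a :: e) = b :: a :: interleave o e := by simp [interleave]
    rw [hstep, cswapPairs, ← List.isChain_iff_pairwise]
    rw [← List.isChain_iff_pairwise] at ih
    exact (ih.cons_cons min_le_max).cons_cons (le_min hcb hca)

theorem countP_evensOf_append_bounds {A B : List α} (hA : Even A.length)
    (hAs : A.Pairwise (· ≤ ·)) (hBs : B.Pairwise (· ≤ ·)) (x : α) :
    (oddsOf (A ++ B)).countP (· ≤ x) ≤ (evensOf (A ++ B)).countP (· ≤ x) ∧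
      (evensOf (A ++ B)).countP (· ≤ x) ≤ (oddsOf (A ++ B)).countP (· ≤ x) + 2 := by
  have hA' := pairwise_decide_le_imp_of_pairwise hAs x
  have hB' := pairwise_decide_le_imp_of_pairwise hBs x
  rw [evensOf_append hA, oddsOf_append hA, List.countP_append, List.countP_append,
    countP_evensOf_of_pairwise hA', countP_evensOf_of_pairwise hB',
    countP_oddsOf_of_pairwise hA', countP_oddsOf_of_pairwise hB']
  omega

theorem pairwise_oemerge_append : ∀ (t : ℕ) {A B : List α},
    A.length = 2 ^ t → B.length = 2 ^ t → A.Pairwise (· ≤ ·) → B.Pairwise (· ≤ ·) →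
    (oemerge (t + 1) (A ++ B)).Pairwise (· ≤ ·)
  | 0, [a], [b], _, _, _, _ => by simp [oemerge, cswapPairs]
  | t + 1, A, B, hA, hB, hAs, hBs => by
    have hAeven : Even A.length := ⟨2 ^ t, by rw [hA, pow_succ, mul_two]⟩
    have hhalf : ∀ l : List α, l.length = 2 ^ (t + 1) →
        (evensOf l).length = 2 ^ t ∧ (oddsOf l).length = 2 ^ t := by
      intro l hl
      rw [length_evensOf, length_oddsOf, hl, pow_succ]
      omega
    set E := oemerge (t + 1) (evensOf (A ++ B)) with hEdef
    set O := oemerge (t + 1) (oddsOf (A ++ B)) with hOdef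
    have hE : E.Pairwise (· ≤ ·) := by
      rw [hEdef, evensOf_append hAeven]
      exact pairwise_oemerge_append t (hhalf A hA).1 (hhalf B hB).1
        (hAs.sublist (evensOf_sublist A)) (hBs.sublist (evensOf_sublist B))
    have hO : O.Pairwise (· ≤ ·) := by
      rw [hOdef, oddsOf_append hAeven]
      exact pairwise_oemerge_append t (hhalf A hA).2 (hhalf B hB).2
        (hAs.sublist (oddsOf_sublist A)) (hBs.sublist (oddsOf_sublist B))
    have hcount : ∀ x : α, O.countP (· ≤ x) ≤ E.countP (· ≤ x) + 0 ∧
        E.countP (· ≤ x) ≤ O.countP (· ≤ x) + 2 := fun x => by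
      rw [hEdef, hOdef, (oemerge_perm _ _).countP_eq, (oemerge_perm _ _).countP_eq]
      exact countP_evensOf_append_bounds hAeven hAs hBs x
    obtain ⟨c, e, hce⟩ : ∃ c e, E = c :: e := by
      apply List.exists_cons_of_length_pos
      rw [(oemerge_perm _ _).length_eq, evensOf_append hAeven, List.length_append,
        (hhalf A hA).1, (hhalf B hB).1]
      positivity
    rw [oemerge_add_two_of_interleave_eq_cons (c := c) (rest := interleave O e)
      (by rw [← hEdef, ← hOdef, hce, interleave])]
    rw [hce] at hE hcount
    exact pairwise_cons_cswapPairs_interleave hE hO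
      (le_of_countP_le_add hO hE fun x => (hcount x).1)
      (le_of_countP_le_add hE hO fun x => (hcount x).2)

end

/-- Correctness of Batcher's odd-even merge: on a list of length `n = 2^t`
(`t ≥ 1`) whose two halves of length `n/2` are each sorted, odd-even merge
produces a sorted list that is a permutation of the input. -/
theorem oemerge_correct {α : Type*} [LinearOrder α] (t : ℕ) (ht : 1 ≤ t)
    (l : List α) (hlen : l.length = 2 ^ t)
    (h1 : (l.take (2 ^ (t - 1))).Pairwise (· ≤ ·))
    (h2 : (l.drop (2 ^ (t - 1))).Pairwise (· ≤ ·)) :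
    (oemerge t l).Pairwise (· ≤ ·) ∧ (oemerge t l).Perm l := by
  obtain ⟨s, rfl⟩ : ∃ s, t = s + 1 := ⟨t - 1, by omega⟩
  rw [Nat.add_sub_cancel] at h1 h2
  have hhalf : 2 ^ s ≤ l.length := by rw [hlen, pow_succ]; omega
  refine ⟨?_, oemerge_perm _ l⟩
  rw [← List.take_append_drop (2 ^ s) l]
  exact pairwise_oemerge_append s (by simp [hhalf]) (by simp [hlen, pow_succ]; omega) h1 h2
end

section
/- Bitonic merge correctness (zero-one principle case): if a sequence of bits (0s and 1s) of length n = 2^t is bitonic, then after applying compare-and-swap to each pair (a_i, a_{i+n/2}) for 0 <= i < n/2, both resulting halves are bitonic and every element of the first half is at most every element of the second half. -/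
/-!
The ones of a bitonic bit string form a cyclic arc, so the string is a rotation of a
nonincreasing one `1…10…0`. The half-cleaner, which compares positions `i` and `i + n` of a
list of length `2 * n`, commutes with rotations since `min` and `max` are symmetric. On a
nonincreasing list the first half dominates the second pointwise, so the `min` half is the
second half and the `max` half the first: both are nonincreasing, hence bitonic, and every
element of the former is at most every element of the latter.
-/

/-- A list is bitonic if some circular shift of it first (weakly) increases
and then (weakly) decreases. -/
def IsBitonic {α : Type*} [LinearOrder α] (l : List α) : Prop :=
  ∃ (m : ℕ) (l1 l2 : List α),
    l.rotate m = l1 ++ l2 ∧ l1.Pairwise (· ≤ ·) ∧ l2.Pairwise (· ≥ ·)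

open List

section LinearOrder

variable {α : Type*} [LinearOrder α] {l l' : List α}

theorem IsBitonic.of_isRotated (hb : IsBitonic l) (h : l ~r l') : IsBitonic l' := by
  obtain ⟨m, l1, l2, hm, h1, h2⟩ := hb
  obtain ⟨k, hk⟩ : l' ~r l1 ++ l2 := h.symm.trans ⟨m, hm⟩
  exact ⟨k, l1, l2, hk, h1, h2⟩

theorem isBitonic_of_pairwise_ge (h : l.Pairwise (· ≥ ·)) : IsBitonic l :=
  ⟨0, [], l, by simp, .nil, h⟩

theorem zipWith_min_eq_right_of_forall_le {u v : List α} (hlen : v.length ≤ u.length)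
    (h : ∀ a ∈ u, ∀ b ∈ v, b ≤ a) : zipWith min u v = v := by
  induction u generalizing v with
  | nil => simp_all
  | cons x u ih =>
    cases v with
    | nil => simp
    | cons y v => simp_all

theorem zipWith_max_eq_left_of_forall_le {u v : List α} (hlen : u.length ≤ v.length)
    (h : ∀ a ∈ u, ∀ b ∈ v, b ≤ a) : zipWith max u v = u := by
  induction u generalizing v with
  | nil => simp_all
  | cons x u ih =>
    cases v with
    | nil => simp_all
    | cons y v => simp_all

end LinearOrder

theorem Bool.exists_replicate_append_replicate_of_pairwise_le {l : List Bool}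
    (h : l.Pairwise (· ≤ ·)) :
    ∃ a b, l = replicate a false ++ replicate b true := by
  induction l with
  | nil => exact ⟨0, 0, rfl⟩
  | cons x xs ih =>
    obtain ⟨hx, hxs⟩ := pairwise_cons.1 h
    cases x with
    | false =>
      obtain ⟨a, b, rfl⟩ := ih hxs
      exact ⟨a + 1, b, rfl⟩
    | true =>
      have hxs : xs = replicate xs.length true :=
        eq_replicate_iff.2 ⟨rfl, fun b hb => top_le_iff.1 (hx b hb)⟩
      exact ⟨0, xs.length + 1, by nth_rw 1 [hxs]; rfl⟩

theorem IsBitonic.exists_pairwise_ge_isRotated {l : List Bool} (hb : IsBitonic l) :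
    ∃ w, w.Pairwise (· ≥ ·) ∧ w ~r l := by
  obtain ⟨m, l1, l2, hm, h1, h2⟩ := hb
  obtain ⟨a, b, rfl⟩ := Bool.exists_replicate_append_replicate_of_pairwise_le h1
  refine ⟨replicate b true ++ l2 ++ replicate a false, ?_, ?_⟩
  · simp [pairwise_append, pairwise_replicate, h2]
  · have hrot : l.rotate m = replicate a false ++ (replicate b true ++ l2) := by simp [hm]
    exact isRotated_append.trans (hrot ▸ IsRotated.forall l m)

def halfZipWith {α β : Type*} (f : α → α → β) (n : ℕ) (l : List α) : List β :=
  zipWith f (l.take n) (l.drop n)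

section HalfZipWith

variable {α β : Type*} {f : α → α → β} {n : ℕ} {l : List α}

theorem halfZipWith_rotate_one (hf : ∀ x y, f x y = f y x) (hl : l.length = 2 * n) :
    halfZipWith f n (l.rotate 1) = (halfZipWith f n l).rotate 1 := by
  obtain ⟨u, v, rfl, hu, hv⟩ : ∃ u v, l = u ++ v ∧ u.length = n ∧ v.length = n :=
    ⟨l.take n, l.drop n, (take_append_drop n l).symm, by simp; omega, by simp; omega⟩
  subst hu
  cases u with
  | nil => simp_all [halfZipWith]
  | cons x u =>
    cases v with
    | nil => simp at hv
    | cons y v =>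
      simp only [length_cons, add_left_inj] at hv
      simp [halfZipWith, take_append, take_of_length_le, zipWith_append, hv, hf x y]

theorem halfZipWith_rotate (hf : ∀ x y, f x y = f y x) (hl : l.length = 2 * n) (k : ℕ) :
    halfZipWith f n (l.rotate k) = (halfZipWith f n l).rotate k := by
  induction k with
  | zero => simp
  | succ k ih =>
    rw [← rotate_rotate, halfZipWith_rotate_one hf (by rw [length_rotate, hl]), ih,
      rotate_rotate]

theorem List.IsRotated.halfZipWith {l' : List α} (hf : ∀ x y, f x y = f y x)
    (hl : l.length = 2 * n) (h : l ~r l') : halfZipWith f n l ~r halfZipWith f n l' := by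
  obtain ⟨k, rfl⟩ := h
  exact ⟨k, (halfZipWith_rotate hf hl k).symm⟩

end HalfZipWith

section Antitone

variable {α : Type*} [LinearOrder α] {n : ℕ} {l : List α}

theorem halfZipWith_min_of_pairwise_ge (h : l.Pairwise (· ≥ ·)) (hl : l.length = 2 * n) :
    halfZipWith min n l = l.drop n :=
  zipWith_min_eq_right_of_forall_le (by simp; omega)
    fun _ ha _ hb => h.rel_of_mem_take_of_mem_drop ha hb

theorem halfZipWith_max_of_pairwise_ge (h : l.Pairwise (· ≥ ·)) (hl : l.length = 2 * n) :
    halfZipWith max n l = l.take n :=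
  zipWith_max_eq_left_of_forall_le (by simp; omega)
    fun _ ha _ hb => h.rel_of_mem_take_of_mem_drop ha hb

end Antitone

/-- The half-cleaner lemma of bitonic sort for 0-1 sequences: if a list of
bits of length `n = 2^t` is bitonic, then after compare-and-swapping each pair
`(aᵢ, aᵢ₊ₙ/₂)` for `0 ≤ i < n/2`, both resulting halves are bitonic and every
element of the first half is at most every element of the second half. -/
theorem bitonic_half_cleaner (t : ℕ) (ht : 1 ≤ t) (l : List Bool)
    (hlen : l.length = 2 ^ t) (hb : IsBitonic l) :
    (IsBitonic (List.zipWith min (l.take (2 ^ (t - 1))) (l.drop (2 ^ (t - 1))))) ∧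
    (IsBitonic (List.zipWith max (l.take (2 ^ (t - 1))) (l.drop (2 ^ (t - 1))))) ∧
    (∀ a ∈ List.zipWith min (l.take (2 ^ (t - 1))) (l.drop (2 ^ (t - 1))),
      ∀ b ∈ List.zipWith max (l.take (2 ^ (t - 1))) (l.drop (2 ^ (t - 1))),
        a ≤ b) := by
  set n := 2 ^ (t - 1)
  have hl : l.length = 2 * n := by rw [hlen, ← pow_succ', Nat.sub_add_cancel ht]
  obtain ⟨w, hw, hwl⟩ := hb.exists_pairwise_ge_isRotated
  have hwn : w.length = 2 * n := hwl.perm.length_eq.trans hl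
  have hmin : w.drop n ~r halfZipWith min n l :=
    halfZipWith_min_of_pairwise_ge hw hwn ▸ hwl.halfZipWith min_comm hwn
  have hmax : w.take n ~r halfZipWith max n l :=
    halfZipWith_max_of_pairwise_ge hw hwn ▸ hwl.halfZipWith max_comm hwn
  exact ⟨(isBitonic_of_pairwise_ge hw.drop).of_isRotated hmin,
    (isBitonic_of_pairwise_ge hw.take).of_isRotated hmax,
    fun a ha b hb => hw.rel_of_mem_take_of_mem_drop (hmax.mem_iff.2 hb) (hmin.mem_iff.2 ha)⟩
end

section
/- The zero-one principle: a comparator network (a fixed sequence of compare-and-swap operations on fixed wire pairs) sorts every input sequence over every linear order if and only if it sorts every sequence of 0s and 1s. -/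
/-- Applying one comparator `(i, j)`: the values at wires `i` and `j` are
replaced by their min and max respectively. -/
def applyComparator {n : ℕ} {α : Type*} [LinearOrder α]
    (v : Fin n → α) (c : Fin n × Fin n) : Fin n → α :=
  Function.update (Function.update v c.1 (min (v c.1) (v c.2))) c.2 (max (v c.1) (v c.2))

/-- Applying a comparator network: a fixed list of comparators applied in order. -/
def applyNetwork {n : ℕ} {α : Type*} [LinearOrder α]
    (net : List (Fin n × Fin n)) (v : Fin n → α) : Fin n → α :=
  net.foldl applyComparator v

lemma comp_applyComparator {n : ℕ} {α β : Type*} [LinearOrder α] [LinearOrder β]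
    {f : α → β} (hf : Monotone f) (v : Fin n → α) (c : Fin n × Fin n) :
    f ∘ applyComparator v c = applyComparator (f ∘ v) c := by
  funext k
  simp only [applyComparator, Function.comp_apply, Function.update_apply, hf.map_min, hf.map_max]
  split <;> [skip; split] <;> first | exact hf.map_max | exact hf.map_min | rfl

lemma comp_applyNetwork {n : ℕ} {α β : Type*} [LinearOrder α] [LinearOrder β]
    {f : α → β} (hf : Monotone f) (net : List (Fin n × Fin n)) (v : Fin n → α) :
    f ∘ applyNetwork net v = applyNetwork net (f ∘ v) := by
  induction net generalizing v with
  | nil => rfl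
  | cons c net ih =>
      simp only [applyNetwork, List.foldl_cons] at *
      rw [ih, comp_applyComparator hf]

/-- The zero-one principle: a comparator network (with each comparator `(i, j)`
satisfying `i < j`) sorts every input sequence over every linear order iff it
sorts every sequence of 0s and 1s (Booleans). -/
theorem zero_one_principle (n : ℕ) (net : List (Fin n × Fin n))
    (hnet : ∀ p ∈ net, p.1 < p.2) :
    (∀ (α : Type) [LinearOrder α] (v : Fin n → α), Monotone (applyNetwork net v)) ↔
      (∀ v : Fin n → Bool, Monotone (applyNetwork net v)) := by
  constructor
  · intro h v
    exact h Bool v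
  · intro h α _ v
    by_contra hmono
    rw [Monotone] at hmono
    push_neg at hmono
    obtain ⟨i, j, hij, hlt⟩ := hmono
    set w := applyNetwork net v with hw
    have hf : Monotone (fun x : α => decide (w j < x)) := by
      intro a b hab
      simp only [Bool.le_iff_imp, decide_eq_true_eq]
      exact fun h' => lt_of_lt_of_le h' hab
    have h2 : Monotone ((fun x : α => decide (w j < x)) ∘ w) := by
      rw [hw, comp_applyNetwork hf net v]
      exact h _
    have := h2 hij
    simp [Function.comp, hlt] at this
    exact absurd this (by decide)
end
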